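/- arXiv:math/0403331 — 6 statements merged into one kernel-verified Lean document; each statement's English description precedes it below -/
import Mathlib

section
/- In the ring of formal power series in x with coefficients in ℤ[q], the identity Σ_{m=0}^{∞} x^m (x;q)_m = Σ_{n=0}^{∞} (−1)^n x^{3n} q^{n(3n−1)/2} (1 + q^n x) holds. -/
open Finset

/-- The parameter `q`, viewed as a constant of the power series ring `ℤ[q][[x]]`. -/
noncomputable def qc : PowerSeries (Polynomial ℤ) :=
  PowerSeries.C (R := Polynomial ℤ) Polynomial.X

/-- The q-Pochhammer symbol `(x;q)_m = (1-x)(1-qx)⋯(1-q^{m-1}x)` in `ℤ[q][[x]]`. -/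
noncomputable def qPoch (m : ℕ) : PowerSeries (Polynomial ℤ) :=
  ∏ i ∈ Finset.range m, (1 - qc ^ i * PowerSeries.X)

/-- The sum `∑_{m=0}^∞ f m` of a family of power series whose `m`-th member is
divisible by `x^m`: its coefficient at `x^d` is the (finite) sum of the coefficients
at `x^d` of the terms `f 0, …, f d`. -/
noncomputable def seriesSum (f : ℕ → PowerSeries (Polynomial ℤ)) :
    PowerSeries (Polynomial ℤ) :=
  PowerSeries.mk fun d => PowerSeries.coeff (R := Polynomial ℤ) d (∑ m ∈ Finset.range (d + 1), f m)

/-!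
Write `L φ(x) = φ(x) + q x³ φ(qx)`. Both series are solutions of `L φ = 1 + x`, and this
equation has at most one solution because the coefficient of `x^d` in `L φ` is that of `φ`
plus a multiple of the coefficient of `x^(d-3)`.

For the right-hand side, the substitution `x ↦ qx` turns the `n`-th term into minus the
`(n+1)`-st one divided by `q x³`, so `L` telescopes the sum down to its first term `1 + x`.
For the left-hand side, the tails `T n = ∑_{m ≥ n} L (x^m (x;q)_m)` have the closed form
`T 0 = 1 + x`, `T (n+1) = x^(n+1) (qx;q)_n (1 - q^(n+1) x²)`, which is checked by verifying
`L (x^n (x;q)_n) = T n - T (n+1)` with `(x;q)_(n+1) = (1 - x) (qx;q)_n`.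
-/

open PowerSeries

section qDiffOp

variable {R : Type*} [CommSemiring R]

noncomputable def qDiffOp (c a : R) (k : ℕ) : R⟦X⟧ →+ R⟦X⟧ :=
  AddMonoidHom.id _ + (AddMonoidHom.mulLeft (C c * X ^ k)).comp (rescale a).toAddMonoidHom

theorem qDiffOp_apply (c a : R) (k : ℕ) (φ : R⟦X⟧) :
    qDiffOp c a k φ = φ + C c * X ^ k * rescale a φ :=
  rfl

theorem coeff_qDiffOp (c a : R) (k d : ℕ) (φ : R⟦X⟧) :
    coeff d (qDiffOp c a k φ) =
      coeff d φ + if k ≤ d then c * (a ^ (d - k) * coeff (d - k) φ) else 0 := by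
  rw [qDiffOp_apply, map_add, mul_assoc, coeff_C_mul, coeff_X_pow_mul']
  split_ifs <;> simp

theorem rescale_C (a c : R) : rescale a (C c) = C c := by
  refine ext fun n => ?_
  rw [coeff_rescale, coeff_C]
  split_ifs with h
  · rw [h, pow_zero, one_mul]
  · rw [mul_zero]

end qDiffOp

theorem qDiffOp_injective {R : Type*} [CommRing R] (c a : R) {k : ℕ} (hk : 0 < k) :
    Function.Injective (qDiffOp c a k) := by
  refine (injective_iff_map_eq_zero _).2 fun φ hφ => ext fun d => ?_
  induction d using Nat.strong_induction_on with
  | _ d ih =>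
    have h := congrArg (coeff d) hφ
    rw [coeff_qDiffOp, map_zero] at h
    simp only [map_zero] at ih ⊢
    split_ifs at h
    · rwa [ih (d - k) (by omega), mul_zero, mul_zero, add_zero] at h
    · rwa [add_zero] at h

theorem coeff_seriesSum {f : ℕ → PowerSeries (Polynomial ℤ)} (hf : ∀ m, X ^ m ∣ f m)
    {d N : ℕ} (hN : d < N) : coeff d (seriesSum f) = coeff d (∑ m ∈ range N, f m) := by
  rw [seriesSum, coeff_mk, ← sum_range_add_sum_Ico f (hN : d + 1 ≤ N), map_add,
    left_eq_add, map_sum]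
  exact sum_eq_zero fun m hm => X_pow_dvd_iff.1 (hf m) d (mem_Ico.1 hm).1

theorem qDiffOp_seriesSum (c a : Polynomial ℤ) (k : ℕ)
    {f : ℕ → PowerSeries (Polynomial ℤ)} (hf : ∀ m, X ^ m ∣ f m) :
    qDiffOp c a k (seriesSum f) = seriesSum fun m => qDiffOp c a k (f m) := by
  refine ext fun d => ?_
  conv_rhs => rw [seriesSum, coeff_mk, ← map_sum]
  rw [coeff_qDiffOp, coeff_qDiffOp, coeff_seriesSum hf d.lt_succ_self]
  split_ifs
  · rw [coeff_seriesSum hf (by omega : d - k < d + 1)]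
  · rfl

theorem seriesSum_sub_succ {g : ℕ → PowerSeries (Polynomial ℤ)} (hg : ∀ m, X ^ m ∣ g m) :
    seriesSum (fun m => g m - g (m + 1)) = g 0 := by
  refine ext fun d => ?_
  rw [seriesSum, coeff_mk, sum_range_sub', map_sub,
    X_pow_dvd_iff.1 (hg (d + 1)) d d.lt_succ_self, sub_zero]

theorem C_X_eq_qc : (C Polynomial.X : PowerSeries (Polynomial ℤ)) = qc :=
  rfl

theorem rescale_qc : rescale Polynomial.X qc = qc :=
  rescale_C _ _

theorem rescale_X_eq_qc_mul_X : rescale Polynomial.X (X : PowerSeries (Polynomial ℤ)) = qc * X :=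
  rescale_X _

theorem rescale_qPoch (n : ℕ) :
    rescale Polynomial.X (qPoch n) = ∏ i ∈ range n, (1 - qc ^ (i + 1) * X) := by
  simp only [qPoch, map_prod, map_sub, map_one, map_mul, map_pow, rescale_qc,
    rescale_X_eq_qc_mul_X, pow_succ, mul_assoc]

theorem qPoch_succ_eq_one_sub_X_mul_rescale (n : ℕ) :
    qPoch (n + 1) = (1 - X) * rescale Polynomial.X (qPoch n) := by
  rw [qPoch, prod_range_succ', rescale_qPoch, pow_zero, one_mul, mul_comm]

theorem rescale_qPoch_succ (n : ℕ) :
    rescale Polynomial.X (qPoch (n + 1)) =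
      rescale Polynomial.X (qPoch n) * (1 - qc ^ (n + 1) * X) := by
  rw [rescale_qPoch, rescale_qPoch, prod_range_succ]

noncomputable def qPochTail : ℕ → PowerSeries (Polynomial ℤ)
  | 0 => 1 + X
  | n + 1 => X ^ (n + 1) * rescale Polynomial.X (qPoch n) * (1 - qc ^ (n + 1) * X ^ 2)

theorem X_pow_dvd_qPochTail (n : ℕ) : X ^ n ∣ qPochTail n := by
  cases n with
  | zero => rw [pow_zero]; exact one_dvd _
  | succ n => exact (dvd_mul_right _ _).mul_right _

theorem qDiffOp_X_pow_mul_qPoch (n : ℕ) :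
    qDiffOp Polynomial.X Polynomial.X 3 (X ^ n * qPoch n) = qPochTail n - qPochTail (n + 1) := by
  rw [qDiffOp_apply, map_mul, map_pow, rescale_X_eq_qc_mul_X, C_X_eq_qc]
  cases n with
  | zero => simp only [qPochTail, qPoch, range_zero, prod_empty, map_one]; ring
  | succ n =>
    rw [qPochTail, qPochTail, rescale_qPoch_succ, qPoch_succ_eq_one_sub_X_mul_rescale]
    ring

theorem qDiffOp_seriesSum_X_pow_mul_qPoch :
    qDiffOp Polynomial.X Polynomial.X 3 (seriesSum fun m => X ^ m * qPoch m) = 1 + X := by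
  rw [qDiffOp_seriesSum _ _ _ fun m => dvd_mul_right _ _]
  simp only [qDiffOp_X_pow_mul_qPoch]
  exact seriesSum_sub_succ X_pow_dvd_qPochTail

noncomputable def pentagonalTerm (n : ℕ) : PowerSeries (Polynomial ℤ) :=
  (-1) ^ n * X ^ (3 * n) * qc ^ (n * (3 * n - 1) / 2) * (1 + qc ^ n * X)

theorem X_pow_dvd_pentagonalTerm (n : ℕ) : X ^ n ∣ pentagonalTerm n :=
  ((pow_dvd_pow X (by omega : n ≤ 3 * n)).mul_left _).mul_right _ |>.mul_right _

theorem pentagonal_exponent_succ (n : ℕ) :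
    (n + 1) * (3 * (n + 1) - 1) / 2 = n * (3 * n - 1) / 2 + (3 * n + 1) := by
  have h : (n + 1) * (3 * (n + 1) - 1) = n * (3 * n - 1) + (3 * n + 1) * 2 := by
    cases n with
    | zero => rfl
    | succ n =>
      rw [show 3 * (n + 1 + 1) - 1 = 3 * n + 5 by omega, show 3 * (n + 1) - 1 = 3 * n + 2 by omega]
      ring
  rw [h, Nat.add_mul_div_right _ _ two_pos]

theorem qDiffOp_pentagonalTerm (n : ℕ) :
    qDiffOp Polynomial.X Polynomial.X 3 (pentagonalTerm n) =
      pentagonalTerm n - pentagonalTerm (n + 1) := by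
  simp only [qDiffOp_apply, pentagonalTerm, map_mul, map_pow, map_add, map_neg, map_one,
    rescale_qc, rescale_X_eq_qc_mul_X, C_X_eq_qc, pentagonal_exponent_succ]
  ring

theorem qDiffOp_seriesSum_pentagonalTerm :
    qDiffOp Polynomial.X Polynomial.X 3 (seriesSum pentagonalTerm) = 1 + X := by
  rw [qDiffOp_seriesSum _ _ _ X_pow_dvd_pentagonalTerm]
  simp only [qDiffOp_pentagonalTerm]
  rw [seriesSum_sub_succ X_pow_dvd_pentagonalTerm, pentagonalTerm]
  ring

/-- `∑_{m≥0} x^m (x;q)_m = ∑_{n≥0} (-1)^n x^{3n} q^{n(3n-1)/2} (1 + q^n x)` in `ℤ[q][[x]]`. -/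
theorem qSeries_pentagonal_like :
    seriesSum (fun m => PowerSeries.X ^ m * qPoch m) =
      seriesSum (fun n =>
        (-1) ^ n * PowerSeries.X ^ (3 * n) * qc ^ (n * (3 * n - 1) / 2)
          * (1 + qc ^ n * PowerSeries.X)) :=
  qDiffOp_injective Polynomial.X Polynomial.X three_pos
    (qDiffOp_seriesSum_X_pow_mul_qPoch.trans qDiffOp_seriesSum_pentagonalTerm.symm)
end

section
/- For every integer m ≥ 0, the q-binomial sums S_n = Σ_{k=0}^{⌊n/2⌋} (−1)^k q^{k(k−1)/2} [n−k choose k]_q satisfy: S_{6m} = q^{6m²−m}, S_{6m+1} = q^{6m²+m}, S_{6m+2} = 0, S_{6m+3} = −q^{6m²+5m+1}, S_{6m+4} = −q^{6m²+7m+2}, and S_{6m+5} = 0, as identities in the polynomial ring ℤ[q]. -/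
/-- The Gaussian (q-)binomial coefficient `[n choose k]_q ∈ ℤ[q]`, defined through the
q-Pascal recurrence `[n+1 choose k+1] = [n choose k] + q^{k+1} [n choose k+1]`. -/
noncomputable def qBinom : ℕ → ℕ → Polynomial ℤ
  | _, 0 => 1
  | 0, _ + 1 => 0
  | n + 1, k + 1 => qBinom n k + Polynomial.X ^ (k + 1) * qBinom n (k + 1)

/-- `S_n = ∑_{k=0}^{⌊n/2⌋} (-1)^k q^{k(k-1)/2} [n-k choose k]_q ∈ ℤ[q]`. -/
noncomputable def qBinomSum (n : ℕ) : Polynomial ℤ :=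
  ∑ k ∈ Finset.range (n / 2 + 1),
    (-1) ^ k * Polynomial.X ^ (k * (k - 1) / 2) * qBinom (n - k) k

/-!
With the companion sum `T_n = ∑_k (-1)^k q^{k(k+1)/2} [n-k choose k]_q`, the two q-Pascal rules
give `S_{n+2} = T_{n+1} - T_n` and `T_{n+2} = T_{n+1} - q^{n+1} S_n`. Eliminating `T` yields
`S_{n+3} = -q^{n+1} S_n`, hence `S_{n+6} = q^{2n+5} S_n`, and the six formulas follow by induction
on `m` from `S_0 = S_1 = 1` and `S_2 = 0`.
-/

open Polynomial Finset

theorem qBinom_zero_right (n : ℕ) : qBinom n 0 = 1 := by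
  cases n <;> rfl

theorem qBinom_succ_succ (n k : ℕ) :
    qBinom (n + 1) (k + 1) = qBinom n k + X ^ (k + 1) * qBinom n (k + 1) :=
  rfl

theorem qBinom_eq_zero_of_lt {n k : ℕ} (h : n < k) : qBinom n k = 0 := by
  induction n generalizing k with
  | zero => obtain ⟨k, rfl⟩ := Nat.exists_eq_add_one_of_ne_zero (by omega : k ≠ 0); rfl
  | succ n ih =>
    obtain ⟨k, rfl⟩ := Nat.exists_eq_add_one_of_ne_zero (by omega : k ≠ 0)
    rw [qBinom_succ_succ, ih (by omega), ih (by omega), mul_zero, add_zero]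

theorem qBinom_self (n : ℕ) : qBinom n n = 1 := by
  induction n with
  | zero => rfl
  | succ n ih =>
    rw [qBinom_succ_succ, ih, qBinom_eq_zero_of_lt n.lt_succ_self, mul_zero, add_zero]

theorem qBinom_succ_succ'_of_le {n k : ℕ} (h : n ≤ k) :
    qBinom (n + 1) (k + 1) = X ^ (n - k) * qBinom n k + qBinom n (k + 1) := by
  rcases h.eq_or_lt with rfl | h
  · rw [qBinom_self, qBinom_self, Nat.sub_self, qBinom_eq_zero_of_lt n.lt_succ_self]
    ring
  · rw [qBinom_eq_zero_of_lt (by omega), qBinom_eq_zero_of_lt h, qBinom_eq_zero_of_lt (by omega)]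
    ring

theorem qBinom_succ_succ' (n k : ℕ) :
    qBinom (n + 1) (k + 1) = X ^ (n - k) * qBinom n k + qBinom n (k + 1) := by
  induction n generalizing k with
  | zero => exact qBinom_succ_succ'_of_le k.zero_le
  | succ n ih =>
    rcases k with _ | k
    · have h := ih 0
      have h₁ := qBinom_succ_succ (n + 1) 0
      have h₂ := qBinom_succ_succ n 0
      simp only [qBinom_zero_right, Nat.sub_zero, mul_one] at h h₁ h₂ ⊢
      linear_combination h₁ + X * h - h₂
    rcases le_or_gt n k with hk | hk
    · exact qBinom_succ_succ'_of_le (by omega)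
    obtain ⟨j, rfl⟩ := Nat.exists_eq_add_of_lt hk
    have ih₀ := ih k
    have ih₁ := ih (k + 1)
    rw [show k + j + 1 - k = j + 1 by omega] at ih₀
    rw [show k + j + 1 - (k + 1) = j by omega] at ih₁
    rw [show k + j + 1 + 1 - (k + 1) = j + 1 by omega]
    linear_combination qBinom_succ_succ (k + j + 1 + 1) (k + 1) + ih₀ + X ^ (k + 2) * ih₁
      - X ^ (j + 1) * qBinom_succ_succ (k + j + 1) k - qBinom_succ_succ (k + j + 1) (k + 1)

theorem mul_add_one_div_two (k : ℕ) : k * (k + 1) / 2 = k * (k - 1) / 2 + k := by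
  simpa [mul_comm] using Nat.triangle_succ k

theorem sum_range_succ_eq_sub_sum {R : Type*} [AddCommGroup R] (f g h : ℕ → R) (N : ℕ)
    (h_zero : g 0 = h 0) (h_succ : ∀ k < N, g (k + 1) = h (k + 1) - f k) :
    ∑ k ∈ range (N + 1), g k = ∑ k ∈ range (N + 1), h k - ∑ k ∈ range N, f k := by
  rw [sum_range_succ', sum_range_succ' h,
    sum_congr rfl fun k hk => h_succ k (mem_range.1 hk), sum_sub_distrib, h_zero]
  abel

theorem sum_range_mul_qBinom_of_half_lt (f : ℕ → ℤ[X]) {n N : ℕ} (h : n / 2 < N) :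
    ∑ k ∈ range N, f k * qBinom (n - k) k = ∑ k ∈ range (n / 2 + 1), f k * qBinom (n - k) k := by
  obtain ⟨d, rfl⟩ := Nat.exists_eq_add_of_le (h : n / 2 + 1 ≤ N)
  rw [sum_range_add, add_eq_left]
  exact sum_eq_zero fun i _ => by rw [qBinom_eq_zero_of_lt (by omega), mul_zero]

noncomputable def qBinomSumShifted (n : ℕ) : ℤ[X] :=
  ∑ k ∈ range (n / 2 + 1), (-1) ^ k * X ^ (k * (k + 1) / 2) * qBinom (n - k) k

theorem qBinomSumShifted_succ_eq_sum_range (n : ℕ) :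
    qBinomSumShifted (n + 1) = ∑ k ∈ range (n / 2 + 1 + 1),
      (-1) ^ k * X ^ (k * (k + 1) / 2) * qBinom (n + 1 - k) k :=
  (sum_range_mul_qBinom_of_half_lt _ (by omega)).symm

theorem qBinomSum_add_two (n : ℕ) :
    qBinomSum (n + 2) = qBinomSumShifted (n + 1) - qBinomSumShifted n := by
  rw [qBinomSum, show (n + 2) / 2 + 1 = n / 2 + 1 + 1 by omega,
    qBinomSumShifted_succ_eq_sum_range, qBinomSumShifted]
  refine sum_range_succ_eq_sub_sum _ _ _ _ (by simp [qBinom_zero_right]) fun k hk => ?_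
  rw [show n + 2 - (k + 1) = n - k + 1 by omega, show n + 1 - (k + 1) = n - k by omega,
    qBinom_succ_succ, Nat.add_sub_cancel, mul_comm (k + 1) k, mul_add_one_div_two (k + 1),
    Nat.add_sub_cancel, mul_comm (k + 1) k]
  ring

theorem qBinomSumShifted_add_two (n : ℕ) :
    qBinomSumShifted (n + 2) = qBinomSumShifted (n + 1) - X ^ (n + 1) * qBinomSum n := by
  rw [qBinomSumShifted, show (n + 2) / 2 + 1 = n / 2 + 1 + 1 by omega,
    qBinomSumShifted_succ_eq_sum_range, qBinomSum, mul_sum]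
  refine sum_range_succ_eq_sub_sum _ _ _ _ (by simp [qBinom_zero_right]) fun k hk => ?_
  obtain ⟨d, rfl⟩ := Nat.exists_eq_add_of_le (show 2 * k ≤ n by omega)
  rw [show 2 * k + d + 2 - (k + 1) = k + d + 1 by omega,
    show 2 * k + d + 1 - (k + 1) = k + d by omega, show 2 * k + d - k = k + d by omega,
    qBinom_succ_succ', Nat.add_sub_cancel_left, mul_add_one_div_two (k + 1), Nat.add_sub_cancel,
    mul_comm (k + 1) k, mul_add_one_div_two k]
  ring

theorem qBinomSum_add_three (n : ℕ) : qBinomSum (n + 3) = -X ^ (n + 1) * qBinomSum n := by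
  rw [qBinomSum_add_two, qBinomSumShifted_add_two]
  ring

theorem qBinomSum_add_six (n : ℕ) : qBinomSum (n + 6) = X ^ (2 * n + 5) * qBinomSum n := by
  rw [show n + 6 = n + 3 + 3 from rfl, qBinomSum_add_three, qBinomSum_add_three]
  ring

theorem qBinomSum_zero : qBinomSum 0 = 1 := by
  simp [qBinomSum, qBinom_zero_right]

theorem qBinomSum_one : qBinomSum 1 = 1 := by
  simp [qBinomSum, qBinom_zero_right]

theorem qBinomSum_two : qBinomSum 2 = 0 := by
  simp [qBinomSum, sum_range_succ, qBinom_zero_right, qBinom_self]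

theorem qBinomSum_six_mul (m : ℕ) : qBinomSum (6 * m) = X ^ (6 * m ^ 2 - m) := by
  induction m with
  | zero => simpa using qBinomSum_zero
  | succ m ih =>
    have hm : m ≤ 6 * m ^ 2 := by nlinarith
    rw [show 6 * (m + 1) = 6 * m + 6 by ring, qBinomSum_add_six, ih, ← pow_add,
      show (m + 1) ^ 2 = m ^ 2 + 2 * m + 1 by ring]
    congr 1
    omega

theorem qBinomSum_six_mul_add_one (m : ℕ) : qBinomSum (6 * m + 1) = X ^ (6 * m ^ 2 + m) := by
  induction m with
  | zero => simpa using qBinomSum_one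
  | succ m ih =>
    rw [show 6 * (m + 1) + 1 = 6 * m + 1 + 6 by ring, qBinomSum_add_six, ih]
    ring

theorem qBinomSum_six_mul_add_two (m : ℕ) : qBinomSum (6 * m + 2) = 0 := by
  induction m with
  | zero => exact qBinomSum_two
  | succ m ih => rw [show 6 * (m + 1) + 2 = 6 * m + 2 + 6 by ring, qBinomSum_add_six, ih, mul_zero]

/-- 6-periodicity of the q-binomial sums `S_n`: for every `m ≥ 0`,
`S_{6m} = q^{6m²-m}`, `S_{6m+1} = q^{6m²+m}`, `S_{6m+2} = 0`, `S_{6m+3} = -q^{6m²+5m+1}`,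
`S_{6m+4} = -q^{6m²+7m+2}`, `S_{6m+5} = 0` in `ℤ[q]`. -/
theorem qBinomSum_six_periodic (m : ℕ) :
    qBinomSum (6 * m) = Polynomial.X ^ (6 * m ^ 2 - m) ∧
    qBinomSum (6 * m + 1) = Polynomial.X ^ (6 * m ^ 2 + m) ∧
    qBinomSum (6 * m + 2) = 0 ∧
    qBinomSum (6 * m + 3) = -Polynomial.X ^ (6 * m ^ 2 + 5 * m + 1) ∧
    qBinomSum (6 * m + 4) = -Polynomial.X ^ (6 * m ^ 2 + 7 * m + 2) ∧
    qBinomSum (6 * m + 5) = 0 := by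
  have h₀ := qBinomSum_six_mul m
  have h₁ := qBinomSum_six_mul_add_one m
  have h₂ := qBinomSum_six_mul_add_two m
  refine ⟨h₀, h₁, h₂, ?_, ?_, ?_⟩
  · have hm : m ≤ 6 * m ^ 2 := by nlinarith
    rw [qBinomSum_add_three, h₀, neg_mul, ← pow_add]
    congr 2
    omega
  · rw [qBinomSum_add_three, h₁]
    ring
  · rw [qBinomSum_add_three, h₂, mul_zero]
end

section
/- Euler's pentagonal number theorem: in the ring ℤ[[q]] of formal power series, the infinite product Π_{j=1}^{∞} (1 − q^j) equals Σ_{n=−∞}^{∞} (−1)^n q^{n(3n+1)/2}, i.e., it equals 1 + Σ_{n=1}^{∞} (−1)^n (q^{n(3n−1)/2} + q^{n(3n+1)/2}). -/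
/-- The infinite product `∏_{j=1}^∞ (1 - q^j)` in `ℤ[[q]]`: for each `k`, the coefficient
of `q^k` in the partial products `∏_{j=1}^N (1 - q^j)` stabilizes for `N ≥ k`, and the
infinite product is the power series with these stabilized coefficients. -/
noncomputable def eulerProduct : PowerSeries ℤ :=
  PowerSeries.mk fun k =>
    PowerSeries.coeff (R := ℤ) k (∏ j ∈ Finset.Icc 1 k, (1 - PowerSeries.X ^ j))

/-- The sum `1 + ∑_{n=1}^∞ f n` of a family of power series in `ℤ[[q]]` whose `n`-th
member (for `n ≥ 1`) has `q`-adic order at least `n`. -/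
noncomputable def onePlusSeriesSum (f : ℕ → PowerSeries ℤ) : PowerSeries ℤ :=
  1 + PowerSeries.mk fun d =>
    PowerSeries.coeff (R := ℤ) d (∑ n ∈ Finset.Icc 1 (d + 1), f n)

/-!
Both sides are identified with Mathlib's `PowerSeries.pentagonalSeries`, for which the theorem is
known as an infinite product and as a sum over `ℤ` in the coefficientwise topology. On the left,
the coefficient of `q^k` in `∏_{j ∈ s} (1 - q^j)` is the same for every finite `s ⊇ {1, …, k}`,
because the extra factors are `≡ 1 mod q^(k+1)`. On the right, folding the `ℤ`-indexed sum at
`±n` gives the terms `(-1)^n (q^{n(3n-1)/2} + q^{n(3n+1)/2})`, and the truncations in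
`onePlusSeriesSum` only drop terms of order above `d`.
-/

open Filter PowerSeries PowerSeries.WithPiTopology

theorem pentagonal_natCast (n : ℕ) : pentagonal n = n * (3 * n - 1) / 2 := by
  rcases n with _ | n
  · rfl
  have := two_mul_natCast_pentagonal (n + 1)
  zify [show 1 ≤ 3 * (n + 1) by omega]
  omega

theorem pentagonal_neg_natCast (n : ℕ) : pentagonal (-n) = n * (3 * n + 1) / 2 := by
  have := two_mul_natCast_pentagonal_neg n
  zify
  omega

theorem le_mul_three_mul_sub_one_div_two (n : ℕ) : n ≤ n * (3 * n - 1) / 2 := by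
  rw [Nat.le_div_iff_mul_le two_pos]
  rcases n with _ | n
  · rfl
  · exact Nat.mul_le_mul_left _ (by omega)

namespace PowerSeries

variable {R : Type*} [CommRing R]

theorem coeff_prod_eq_of_subset {f : ℕ → R⟦X⟧} {k : ℕ} {s t : Finset ℕ} (hts : t ⊆ s)
    (hf : ∀ n ∈ s \ t, X ^ (k + 1) ∣ f n - 1) :
    coeff k (∏ n ∈ s, f n) = coeff k (∏ n ∈ t, f n) := by
  obtain ⟨c, hc⟩ : X ^ (k + 1) ∣ ∏ n ∈ s \ t, f n - 1 := by
    refine Finset.prod_induction f (fun x ↦ X ^ (k + 1) ∣ x - 1) (fun x y hx hy ↦ ?_)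
      (by simp) hf
    have : x * y - 1 = x * (y - 1) + (x - 1) := by ring
    exact this ▸ (dvd_mul_of_dvd_right hy x).add hx
  rw [← Finset.prod_sdiff hts, eq_add_of_sub_eq hc, add_mul, one_mul, map_add, mul_assoc,
    coeff_X_pow_mul', if_neg (by omega), zero_add]

theorem coeff_prod_one_sub_X_pow_of_range_subset {k : ℕ} {s : Finset ℕ}
    (hs : Finset.range k ⊆ s) :
    coeff k (∏ n ∈ s, (1 - X ^ (n + 1) : R⟦X⟧)) =
      coeff k (∏ n ∈ Finset.range k, (1 - X ^ (n + 1) : R⟦X⟧)) := by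
  refine coeff_prod_eq_of_subset hs fun n hn ↦ ?_
  have hkn : k ≤ n := by simpa using (Finset.mem_sdiff.1 hn).2
  simpa using pow_dvd_pow (X : R⟦X⟧) (by omega : k + 1 ≤ n + 1)

theorem coeff_prod_range_one_sub_X_pow (k : ℕ) :
    coeff k (∏ n ∈ Finset.range k, (1 - X ^ (n + 1) : R⟦X⟧)) =
      coeff k (pentagonalSeries R) := by
  obtain ⟨s, hs, hks⟩ := ((coeff_prod_one_sub_X_pow_eventually_eq R k).and
    (eventually_ge_atTop (Finset.range k))).exists
  rw [← hs, coeff_prod_one_sub_X_pow_of_range_subset hks]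

end PowerSeries

theorem eulerProduct_eq_pentagonalSeries : eulerProduct = pentagonalSeries ℤ := by
  ext k
  rw [eulerProduct, coeff_mk, ← coeff_prod_range_one_sub_X_pow, Finset.range_eq_Ico,
    Finset.prod_Ico_add' (fun j ↦ 1 - X ^ j), zero_add, Finset.Ico_add_one_right_eq_Icc]

theorem onePlusSeriesSum_eq_of_hasSum {f : ℕ → ℤ⟦X⟧} {a : ℤ⟦X⟧} (hf : HasSum f a)
    (hdvd : ∀ n, X ^ n ∣ f n) : onePlusSeriesSum f = 1 + a - f 0 := by
  ext d
  have hsum : coeff d a = ∑ n ∈ insert 0 (Finset.Icc 1 (d + 1)), coeff d (f n) := by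
    refine (hasSum_iff_hasSum_coeff ℤ |>.1 hf d).unique
      (hasSum_sum_of_ne_finset_zero fun n hn ↦ X_pow_dvd_iff.1 (hdvd n) d ?_)
    simp only [Finset.mem_insert, Finset.mem_Icc, not_or] at hn
    omega
  rw [Finset.sum_insert (by simp)] at hsum
  simp only [onePlusSeriesSum, map_add, map_sub, coeff_mk, map_sum, hsum]
  ring

theorem onePlusSeriesSum_pentagonal_eq_pentagonalSeries :
    onePlusSeriesSum (fun n ↦ (-1) ^ n * (X ^ (n * (3 * n - 1) / 2) + X ^ (n * (3 * n + 1) / 2)))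
      = pentagonalSeries ℤ := by
  have hsum := (hasSum_pentagonalSeries ℤ).nat_add_neg
  have hterm : (fun n : ℕ ↦ ((n : ℤ).negOnePow : ℤ⟦X⟧) * X ^ pentagonal n +
        ((-n : ℤ).negOnePow : ℤ⟦X⟧) * X ^ pentagonal (-n)) =
      fun n ↦ (-1) ^ n * (X ^ (n * (3 * n - 1) / 2) + X ^ (n * (3 * n + 1) / 2)) := by
    ext1 n
    rw [Int.negOnePow_neg, Int.cast_negOnePow_natCast, pentagonal_natCast,
      pentagonal_neg_natCast, ← mul_add]
  rw [hterm] at hsum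
  rw [onePlusSeriesSum_eq_of_hasSum hsum fun n ↦ ?_]
  · simp [pentagonal]
  · refine Dvd.dvd.mul_left (dvd_add (pow_dvd_pow X ?_) (pow_dvd_pow X ?_)) _
    · exact le_mul_three_mul_sub_one_div_two n
    · exact (le_mul_three_mul_sub_one_div_two n).trans
        (Nat.div_le_div_right (Nat.mul_le_mul_left n (by omega)))

/-- Euler's pentagonal number theorem:
`∏_{j=1}^∞ (1 - q^j) = 1 + ∑_{n=1}^∞ (-1)^n (q^{n(3n-1)/2} + q^{n(3n+1)/2})` in `ℤ[[q]]`. -/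
theorem pentagonal_number_theorem :
    eulerProduct =
      onePlusSeriesSum fun n =>
        (-1) ^ n * (PowerSeries.X ^ (n * (3 * n - 1) / 2) + PowerSeries.X ^ (n * (3 * n + 1) / 2)) := by
  rw [eulerProduct_eq_pentagonalSeries, onePlusSeriesSum_pentagonal_eq_pentagonalSeries]
end

section
/- The polynomials f_n = Σ_{k=0}^{⌊n/2⌋} (−1)^k q^{k²} [n−k choose k]_q ∈ ℤ[q] satisfy f_0 = 1, f_1 = 1, and the second-order recurrence f_{n+2} = f_{n+1} − q^{n+1} f_n for all n ≥ 0. -/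
/-- `f_n = ∑_{k=0}^{⌊n/2⌋} (-1)^k q^{k²} [n-k choose k]_q ∈ ℤ[q]`. -/
noncomputable def fPoly (n : ℕ) : Polynomial ℤ :=
  ∑ k ∈ Finset.range (n / 2 + 1),
    (-1) ^ k * Polynomial.X ^ (k ^ 2) * qBinom (n - k) k

/-!
Write `f_n = ∑ₖ tₙ(k)` with `tₙ(k) = (-1)^k q^{k²} [n-k choose k]_q`; the sum may run over any
`k < N` with `N > n/2`, since `tₙ(k) = 0` once `2k > n`. The q-Pascal rule in its second form,
`[m+1 choose k+1] = q^{m-k} [m choose k] + [m choose k+1]`, gives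
`t_{n+2}(k+1) - t_{n+1}(k+1) = -q^{n+1} tₙ(k)`, and `tₙ(0) = 1`, so summing over `k` yields the
recurrence.
-/

open Polynomial Finset

noncomputable def fPolyTerm (n k : ℕ) : ℤ[X] :=
  (-1) ^ k * X ^ (k ^ 2) * qBinom (n - k) k

theorem fPolyTerm_zero_right (n : ℕ) : fPolyTerm n 0 = 1 := by
  simp [fPolyTerm, qBinom_zero_right]

theorem fPolyTerm_eq_zero {n k : ℕ} (h : n < 2 * k) : fPolyTerm n k = 0 := by
  rw [fPolyTerm, qBinom_eq_zero_of_lt (by omega), mul_zero]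

theorem fPoly_eq_sum_range {n N : ℕ} (hN : n / 2 < N) :
    fPoly n = ∑ k ∈ range N, fPolyTerm n k :=
  sum_subset (range_subset_range.2 hN) fun _ _ hk =>
    fPolyTerm_eq_zero (by rw [mem_range] at hk; omega)

theorem fPolyTerm_succ_succ_sub (n k : ℕ) :
    fPolyTerm (n + 2) (k + 1) - fPolyTerm (n + 1) (k + 1) = -(X ^ (n + 1) * fPolyTerm n k) := by
  rcases lt_or_ge n (2 * k) with hnk | hkn
  · rw [fPolyTerm_eq_zero hnk, fPolyTerm_eq_zero (by omega), fPolyTerm_eq_zero (by omega)]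
    ring
  · have hpow : X ^ ((k + 1) ^ 2) * X ^ (n - k - k) = (X : ℤ[X]) ^ (k ^ 2) * X ^ (n + 1) := by
      rw [← pow_add, ← pow_add]
      congr 1
      zify [hkn, (by omega : k ≤ n - k), (by omega : k ≤ n)]
      ring
    rw [fPolyTerm, fPolyTerm, fPolyTerm, show n + 2 - (k + 1) = n - k + 1 by omega,
      show n + 1 - (k + 1) = n - k by omega, qBinom_succ_succ']
    linear_combination (-1) ^ (k + 1) * qBinom (n - k) k * hpow

theorem fPoly_succ_succ (n : ℕ) :
    fPoly (n + 2) = fPoly (n + 1) - X ^ (n + 1) * fPoly n := by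
  have hsub : fPoly (n + 2) - fPoly (n + 1) = -(X ^ (n + 1) * fPoly n) := by
    rw [fPoly_eq_sum_range (N := n + 3) (by omega), fPoly_eq_sum_range (N := n + 3) (by omega),
      fPoly_eq_sum_range (N := n + 2) (by omega), ← sum_sub_distrib, sum_range_succ',
      fPolyTerm_zero_right, fPolyTerm_zero_right, sub_self, add_zero, mul_sum, ← sum_neg_distrib]
    exact sum_congr rfl fun k _ => fPolyTerm_succ_succ_sub n k
  linear_combination hsub

theorem fPoly_of_lt_two {n : ℕ} (hn : n < 2) : fPoly n = 1 := by
  rw [fPoly_eq_sum_range (N := 1) (by omega), sum_range_one, fPolyTerm_zero_right]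

/-- `f_0 = 1`, `f_1 = 1`, and `f_{n+2} = f_{n+1} - q^{n+1} f_n` for all `n ≥ 0`. -/
theorem fPoly_recurrence :
    fPoly 0 = 1 ∧ fPoly 1 = 1 ∧
      ∀ n : ℕ, fPoly (n + 2) = fPoly (n + 1) - Polynomial.X ^ (n + 1) * fPoly n :=
  ⟨fPoly_of_lt_two (by norm_num), fPoly_of_lt_two (by norm_num), fPoly_succ_succ⟩
end

section
/- For every odd prime p, the Chebyshev polynomial of the first kind satisfies the congruence T_{p²}(x) ≡ T_p(x^p) (mod p²), i.e., the images of T_{p²}(x) and of the composite T_p(x^p) in (ℤ/p²ℤ)[x] are equal. -/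
/-- The Chebyshev polynomials of the first kind over `ℤ`:
`T 0 = 1`, `T 1 = x`, `T (n+2) = 2x · T (n+1) - T n`. -/
noncomputable def chebT : ℕ → Polynomial ℤ
  | 0 => 1
  | 1 => Polynomial.X
  | n + 2 => 2 * Polynomial.X * chebT (n + 1) - chebT n

open Polynomial in
lemma chebT_eq : ∀ n : ℕ, chebT n = Polynomial.Chebyshev.T ℤ n
  | 0 => by simp [chebT, Polynomial.Chebyshev.T_zero]
  | 1 => by simp [chebT, Polynomial.Chebyshev.T_one]
  | n + 2 => by
    rw [chebT, chebT_eq (n + 1), chebT_eq n]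
    push_cast
    rw [Polynomial.Chebyshev.T_add_two]

open Polynomial in
lemma chebT_map_zmod (p : ℕ) (hp : p.Prime) (hodd : Odd p) :
    Polynomial.map (Int.castRingHom (ZMod p)) (Polynomial.Chebyshev.T ℤ p) = X ^ p := by
  haveI : Fact p.Prime := ⟨hp⟩
  have hp2 : p ≠ 2 := by rintro rfl; simp [Nat.odd_iff] at hodd
  have h2 : (2 : ZMod p) ≠ 0 := by
    have hnd : ¬ (p ∣ 2) := fun h =>
      hp2 ((Nat.prime_dvd_prime_iff_eq hp Nat.prime_two).mp h)
    have : ((2 : ℕ) : ZMod p) ≠ 0 := by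
      rw [Ne, ZMod.natCast_eq_zero_iff]; exact hnd
    simpa using this
  haveI : Invertible (2 : ZMod p) := invertibleOfNonzero h2
  rw [Polynomial.Chebyshev.map_T]
  rw [chebyshev_T_eq_dickson_one_one, dickson_one_one_zmod_p]
  rw [pow_comp, X_comp, mul_pow]
  rw [show (2 : (ZMod p)[X]) = C (2 : ZMod p) from (map_ofNat (Polynomial.C : ZMod p →+* (ZMod p)[X]) 2).symm]
  rw [← C_pow, ZMod.pow_card, ← mul_assoc, ← C_mul, invOf_mul_self, C_1, one_mul]

/-- For every odd prime `p`, `T_{p²}(x) ≡ T_p(x^p) (mod p²)`. -/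
theorem chebT_prime_sq_congruence (p : ℕ) (hp : p.Prime) (hodd : Odd p) :
    Polynomial.map (Int.castRingHom (ZMod (p ^ 2))) (chebT (p ^ 2)) =
      Polynomial.map (Int.castRingHom (ZMod (p ^ 2))) ((chebT p).comp (Polynomial.X ^ p)) := by
  classical
  open Polynomial in
  haveI : Fact p.Prime := ⟨hp⟩
  set q : ℤ[X] := Polynomial.Chebyshev.T ℤ p with hq
  -- Step 1: chebT (p^2) = q.comp q
  have h1 : chebT (p ^ 2) = q.comp q := by
    rw [chebT_eq]
    push_cast
    rw [pow_two, Polynomial.Chebyshev.T_mul]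
  -- Step 2: p ∣ q - X^p, i.e. there is z with q - X^p = C p * z
  have hy : (Polynomial.C (p : ℤ)) ∣ (q - X ^ p) := by
    rw [C_dvd_iff_dvd_coeff]
    intro i
    have hmap : Polynomial.map (Int.castRingHom (ZMod p)) (q - X ^ p) = 0 := by
      rw [Polynomial.map_sub, chebT_map_zmod p hp hodd]
      simp
    have h0 : ((((q - X ^ p).coeff i : ℤ)) : ZMod p) = 0 := by
      have := congrArg (fun f => Polynomial.coeff f i) hmap
      simpa using this
    exact (ZMod.intCast_zmod_eq_zero_iff_dvd _ p).mp h0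
  obtain ⟨z, hz⟩ := hy
  -- Step 3: p ∣ derivative q
  have hd : (Polynomial.C (p : ℤ)) ∣ derivative q := by
    rw [hq, Polynomial.Chebyshev.T_derivative_eq_U]
    exact ⟨Polynomial.Chebyshev.U ℤ (p - 1), by rw [map_natCast (Polynomial.C : ℤ →+* Polynomial ℤ) p]; push_cast; ring⟩
  obtain ⟨u, hu⟩ := hd
  -- Step 4: binomial expansion in (ℤ[X])[X]
  set Q : (ℤ[X])[X] := q.map (Polynomial.C : ℤ →+* ℤ[X]) with hQ
  obtain ⟨k, hk⟩ := Q.binomExpansion (X ^ p) (q - X ^ p)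
  have hcomp : ∀ a : ℤ[X], q.comp a = Q.eval a := fun a => by
    rw [Polynomial.comp, hQ, Polynomial.eval₂_eq_eval_map]
  have hQ' : Q.derivative = (derivative q).map (Polynomial.C : ℤ →+* ℤ[X]) := by
    rw [hQ, derivative_map]
  have key : (Polynomial.C ((p : ℤ) ^ 2)) ∣ (q.comp q - q.comp (X ^ p)) := by
    have hx : X ^ p + (q - X ^ p) = q := by ring
    rw [hx] at hk
    rw [hcomp q, hcomp (X ^ p), hk]
    have e1 : Q.derivative.eval (X ^ p) * (q - X ^ p) =
        Polynomial.C ((p : ℤ)^2) * ((u.map Polynomial.C).eval (X ^ p) * z) := by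
      rw [hQ', hu, hz]
      simp [Polynomial.map_mul, pow_two, C_mul]
      ring
    have e2 : k * (q - X ^ p) ^ 2 = Polynomial.C ((p : ℤ)^2) * (k * z ^ 2) := by
      rw [hz]
      simp [mul_pow, pow_two, C_mul]
      ring
    refine ⟨(u.map Polynomial.C).eval (X ^ p) * z + k * z ^ 2, ?_⟩
    rw [mul_add, ← e1, ← e2]
    ring
  obtain ⟨w, hw⟩ := key
  -- Step 5: conclude
  rw [h1, chebT_eq]
  have hfin : Polynomial.map (Int.castRingHom (ZMod (p ^ 2)))
      (q.comp q - q.comp (X ^ p)) = 0 := by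
    rw [hw]
    rw [Polynomial.map_mul, Polynomial.map_C]
    have h0 : (Int.castRingHom (ZMod (p ^ 2))) ((p : ℤ) ^ 2) = 0 := by
      have : (((p ^ 2 : ℕ) : ℤ) : ZMod (p ^ 2)) = 0 := by
        exact_mod_cast ZMod.natCast_self (p ^ 2)
      simpa using this
    rw [h0, Polynomial.C_0, zero_mul]
  rw [← hq]
  exact sub_eq_zero.mp (by rw [← Polynomial.map_sub, hfin])
end

section
/- For every integer n ≥ 0, the Chebyshev polynomial of the first kind satisfies the congruence T_{2^{n+1}}(x) ≡ 1 (mod 2^{2n+1}), i.e., the image of T_{2^{n+1}}(x) − 1 in (ℤ/2^{2n+1}ℤ)[x] is zero. -/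
lemma chebT_eq_T (n : ℕ) : chebT n = Polynomial.Chebyshev.T ℤ n := by
  induction n using Nat.strong_induction_on with
  | _ n ih =>
    match n with
    | 0 => simp [chebT, Polynomial.Chebyshev.T_zero]
    | 1 => simp [chebT, Polynomial.Chebyshev.T_one]
    | n + 2 =>
      have h := Polynomial.Chebyshev.T_add_two ℤ (n : ℤ)
      rw [chebT, ih (n+1) (by omega), ih n (by omega)]
      push_cast
      rw [h]

lemma chebT_two_mul (m : ℕ) : chebT (2 * m) = 2 * (chebT m) ^ 2 - 1 := by
  rw [chebT_eq_T, chebT_eq_T]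
  push_cast
  rw [Polynomial.Chebyshev.T_mul, Polynomial.Chebyshev.T_two]
  simp [Polynomial.sub_comp, Polynomial.mul_comp, Polynomial.pow_comp]

lemma chebT_dvd (n : ℕ) : (2 ^ (2 * n + 1) : Polynomial ℤ) ∣ chebT (2 ^ (n + 1)) - 1 := by
  induction n with
  | zero =>
    refine ⟨Polynomial.X ^ 2 - 1, ?_⟩
    norm_num [chebT]
    ring
  | succ n ih =>
    have key : chebT (2 ^ (n + 2)) - 1
        = 2 * ((chebT (2 ^ (n + 1)) - 1) * ((chebT (2 ^ (n + 1)) - 1) + 2)) := by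
      rw [show 2 ^ (n + 2) = 2 * 2 ^ (n + 1) by ring, chebT_two_mul]; ring
    obtain ⟨p, hp⟩ := ih
    have h2 : (2 : Polynomial ℤ) ∣ chebT (2 ^ (n + 1)) - 1 :=
      dvd_trans (dvd_pow_self 2 (by omega)) ⟨p, hp⟩
    obtain ⟨q, hq⟩ := h2
    refine ⟨p * (q + 1), ?_⟩
    rw [key]
    linear_combination (2 * (chebT (2 ^ (n + 1)) - 1 + 2)) * hp + 2 ^ (2 * n + 2) * p * hq

/-- For every `n ≥ 0`, `T_{2^{n+1}}(x) ≡ 1 (mod 2^{2n+1})`. -/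
theorem chebT_two_pow_congruence (n : ℕ) :
    Polynomial.map (Int.castRingHom (ZMod (2 ^ (2 * n + 1)))) (chebT (2 ^ (n + 1))) = 1 := by
  obtain ⟨p, hp⟩ := chebT_dvd n
  have h : chebT (2 ^ (n + 1)) = 1 + 2 ^ (2 * n + 1) * p := by linear_combination hp
  rw [h]
  simp only [Polynomial.map_add, Polynomial.map_mul, Polynomial.map_pow, Polynomial.map_one,
    Polynomial.map_ofNat]
  have hz : ((2 : ZMod (2 ^ (2 * n + 1))) ^ (2 * n + 1)) = 0 := by
    have := ZMod.natCast_self (2 ^ (2 * n + 1))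
    push_cast at this
    exact this
  have h2 : (2 : Polynomial (ZMod (2 ^ (2 * n + 1)))) = Polynomial.C 2 :=
    (map_ofNat Polynomial.C 2).symm
  rw [h2, ← map_pow, hz, map_zero, zero_mul, add_zero]
end
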